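/- arXiv:2504.11538 — 10 statements merged into one kernel-verified Lean document; each statement's English description precedes it below -/
import Mathlib

section
/- Let M be a metric space. The following are equivalent: (i) M is a finite set; (ii) C(M,ℝ) is a finitely generated ℝ-module (a finite ℝ-algebra); (iii) every element of C(M,ℝ) is integral over ℝ, i.e. satisfies a monic polynomial equation with real coefficients. -/
/-!
If `f` is integral, `p(f) = 0` for a monic `p`, so `f` takes values among the finitely many
roots of `p`. Applied to `dist · a`, this makes every point of `M` isolated; `M` is then
discrete, so every function `M → ℝ` is continuous, and an infinite `M` carries one with
infinite range. Conversely, for finite `M` the algebra `C(M, ℝ)` embeds in `M → ℝ`.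
-/

open Polynomial

theorem ContinuousMap.moduleFinite_of_finite {X R : Type*} [TopologicalSpace X] [Finite X]
    [CommRing R] [IsNoetherianRing R] [TopologicalSpace R] [IsTopologicalRing R] :
    Module.Finite R C(X, R) :=
  Module.Finite.of_injective (ContinuousMap.coeFnLinearMap R) DFunLike.coe_injective

theorem ContinuousMap.finite_range_of_isIntegral {X R : Type*} [TopologicalSpace X]
    [CommRing R] [IsDomain R] [TopologicalSpace R] [IsTopologicalRing R] {f : C(X, R)}
    (hf : IsIntegral R f) : (Set.range f).Finite := by
  obtain ⟨p, hp_monic, hp_root⟩ := hf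
  refine (finite_setOfPred_isRoot hp_monic.ne_zero).subset ?_
  rintro _ ⟨x, rfl⟩
  rw [Set.mem_ofPred_eq, IsRoot.def, ← aeval_continuousMap_apply, aeval_def, hp_root,
    ContinuousMap.zero_apply]

theorem isOpen_singleton_of_finite_range_dist {M : Type*} [MetricSpace M] {a : M}
    (h : (Set.range (dist · a)).Finite) : IsOpen ({a} : Set M) := by
  -- `{a}` is the preimage of the open set `ℝ \ (range (dist · a) \ {0})`.
  have hopen : IsOpen (Set.range (dist · a) \ {0})ᶜ := (h.sdiff.isClosed).isOpen_compl
  convert hopen.preimage (by fun_prop : Continuous (dist · a)) using 1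
  ext x
  simp

theorem finite_of_forall_finite_range {α β : Type*} [Infinite β]
    (h : ∀ f : α → β, (Set.range f).Finite) : Finite α := by
  by_contra hα
  have : Infinite α := not_finite_iff_infinite.mp hα
  have hsurj := Function.invFun_surjective (Infinite.natEmbedding α).injective
  apply Set.infinite_range_of_injective (Infinite.natEmbedding β).injective
  simpa [hsurj.range_comp] using
    h (Infinite.natEmbedding β ∘ Function.invFun (Infinite.natEmbedding α))

theorem finite_of_forall_isIntegral {M : Type*} [MetricSpace M]
    (h : ∀ f : C(M, ℝ), IsIntegral ℝ f) : Finite M := by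
  have : DiscreteTopology M := discreteTopology_iff_isOpen_singleton.mpr fun a ↦
    isOpen_singleton_of_finite_range_dist <| ContinuousMap.finite_range_of_isIntegral
      (h ⟨(dist · a), continuous_id.dist continuous_const⟩)
  exact finite_of_forall_finite_range fun f : M → ℝ ↦
    ContinuousMap.finite_range_of_isIntegral (h ⟨f, continuous_of_discreteTopology⟩)

/-- For a metric space `M`, the following are equivalent:
(i) `M` is finite; (ii) `C(M, ℝ)` is a finitely generated `ℝ`-module;
(iii) every element of `C(M, ℝ)` is integral over `ℝ`. -/
theorem finite_iff_finite_algebra_iff_integral {M : Type*} [MetricSpace M] :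
    (Finite M ↔ Module.Finite ℝ C(M, ℝ)) ∧
      (Finite M ↔ ∀ f : C(M, ℝ), IsIntegral ℝ f) := by
  have finite_algebra : Finite M → Module.Finite ℝ C(M, ℝ) :=
    fun _ ↦ ContinuousMap.moduleFinite_of_finite
  have integral : Module.Finite ℝ C(M, ℝ) → ∀ f : C(M, ℝ), IsIntegral ℝ f :=
    fun _ ↦ IsIntegral.of_finite ℝ
  exact ⟨⟨finite_algebra, fun h ↦ finite_of_forall_isIntegral (integral h)⟩,
    ⟨fun h ↦ integral (finite_algebra h), finite_of_forall_isIntegral⟩⟩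
end

section
/- Let M be a metric space, N a topological space and π : M → N a continuous map such that every element of C(M,ℝ) is integral over C(N,ℝ) via the homomorphism φ_π : C(N,ℝ) → C(M,ℝ), f ↦ f∘π. Then every fiber π⁻¹(y), y ∈ N, is a finite set. -/
open ContinuousMap

/-- The ring homomorphism `φ_π : C(N, ℝ) →+* C(M, ℝ)`, `f ↦ f ∘ π`, induced by a
continuous map `π : M → N`. -/
noncomputable def phiPi {M N : Type*} [TopologicalSpace M] [TopologicalSpace N]
    (π : C(M, N)) : C(N, ℝ) →+* C(M, ℝ) :=
  (ContinuousMap.compRightAlgHom ℝ ℝ π).toRingHom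

/-!
Evaluating an integral equation for `g` at a point `x` of the fiber over `y` shows that `g x`
is a root of a fixed monic real polynomial (its coefficients are evaluated at `y`), so `g`
takes only finitely many values on the fiber, hence also on its closure `K`. Applied to
`dist · x`, this makes every point of `K` isolated. An infinite closed discrete subset of a
metric space would, by Tietze, carry a continuous function with infinitely many values.
-/

open Set Polynomial

theorem finite_image_fiber_of_isIntegralElem {M N : Type*} [TopologicalSpace M]
    [TopologicalSpace N] (π : C(M, N)) {g : C(M, ℝ)} (hg : (phiPi π).IsIntegralElem g)
    (y : N) : (g '' (π ⁻¹' {y})).Finite := by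
  obtain ⟨p, hp_monic, hp_root⟩ := hg
  refine (finite_setOfPred_isRoot (hp_monic.map (evalAlgHom ℝ ℝ y).toRingHom).ne_zero).subset ?_
  rintro _ ⟨x, rfl : π x = y, rfl⟩
  have h_comp :
      (evalAlgHom ℝ ℝ x).toRingHom.comp (phiPi π) = (evalAlgHom ℝ ℝ (π x)).toRingHom := rfl
  have h_root := congrArg (evalAlgHom ℝ ℝ x).toRingHom hp_root
  rw [hom_eval₂, h_comp, map_zero] at h_root
  simpa [IsRoot, eval_map] using h_root

theorem finite_image_closure_of_finite_image {X : Type*} [TopologicalSpace X] {s : Set X}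
    {g : C(X, ℝ)} (hs : (g '' s).Finite) : (g '' closure s).Finite :=
  hs.subset <| (image_closure_subset_closure_image g.continuous).trans hs.isClosed.closure_subset

theorem discreteTopology_of_forall_finite_image {M : Type*} [MetricSpace M] {K : Set M}
    (hK : ∀ g : C(M, ℝ), (g '' K).Finite) : DiscreteTopology K := by
  refine discreteTopology_iff_isOpen_singleton.mpr fun x ↦ ?_
  let d : C(M, ℝ) := ⟨(dist · x), continuous_id.dist continuous_const⟩
  -- `{x}` is the set of points of `K` avoiding the finite, hence closed, set of nonzero distances
  have h_open : IsOpen ((d '' K \ {0})ᶜ) := (hK d).sdiff.isClosed.isOpen_compl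
  convert h_open.preimage (d.continuous.comp continuous_subtype_val)
  ext z
  simp only [d, mem_singleton_iff, mem_preimage, Function.comp_apply, mem_compl_iff, mem_sdiff,
    mem_image, coe_mk, dist_eq_zero, Subtype.ext_iff, not_and, not_not]
  exact ⟨fun h _ ↦ h, fun h ↦ h ⟨z, z.2, rfl⟩⟩

theorem exists_infinite_image_of_discreteTopology {X : Type*} [TopologicalSpace X]
    [NormalSpace X] {K : Set X} (hK_closed : IsClosed K) (hK_inf : K.Infinite)
    [DiscreteTopology K] : ∃ g : C(X, ℝ), (g '' K).Infinite := by
  let e : ℕ ↪ K := hK_inf.natEmbedding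
  let u : C(K, ℝ) :=
    ⟨fun z ↦ ((Function.invFun e z : ℕ) : ℝ), continuous_of_discreteTopology⟩
  obtain ⟨g, hg⟩ := u.exists_restrict_eq hK_closed
  refine ⟨g, (infinite_range_of_injective Nat.cast_injective).mono ?_⟩
  rintro _ ⟨k, rfl⟩
  refine ⟨e k, (e k).2, ?_⟩
  change g.restrict K (e k) = k
  simp [hg, u, Function.leftInverse_invFun e.injective k]

theorem Set.Finite.of_forall_finite_image_continuousMap {M : Type*} [MetricSpace M]
    {s : Set M} (hs : ∀ g : C(M, ℝ), (g '' s).Finite) : s.Finite := by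
  by_contra h_inf
  have hK : ∀ g : C(M, ℝ), (g '' closure s).Finite :=
    fun g ↦ finite_image_closure_of_finite_image (hs g)
  have := discreteTopology_of_forall_finite_image hK
  obtain ⟨g, hg⟩ := exists_infinite_image_of_discreteTopology isClosed_closure
    (fun h ↦ h_inf (h.subset subset_closure))
  exact hg (hK g)

/-- Let `M` be a metric space, `N` a topological space and `π : M → N`
a continuous map such that every element of `C(M, ℝ)` is integral over `C(N, ℝ)` via
`φ_π`. Then every fiber of `π` is finite. -/
theorem fibers_finite_of_integral {M N : Type*} [MetricSpace M] [TopologicalSpace N]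
    (π : C(M, N)) (hint : (phiPi π).IsIntegral) (y : N) :
    (⇑π ⁻¹' {y}).Finite :=
  .of_forall_finite_image_continuousMap fun g ↦ finite_image_fiber_of_isIntegralElem π (hint g) y
end

section
/- Let M and N be metric spaces and π : M → N a continuous, closed and surjective map. Let Y ⊆ N be closed, set X := π⁻¹(Y), and suppose the restriction π|_{M∖X} : M∖X → N∖Y is injective. Then C(M,ℝ) is a finitely generated module over C(N,ℝ) via φ_π : f ↦ f∘π if and only if C(X,ℝ) is a finitely generated module over C(Y,ℝ) via the homomorphism g ↦ g∘(π|_X). -/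
open ContinuousMap

/-! Restricting to the closed sets `X = π⁻¹(Y)` and `Y` is surjective by Tietze. A function on
`M` vanishing on `X` is constant on the fibres of `π`, since `π` is injective off `X`, so it
descends along the quotient map `π`: the kernel of `C(M, ℝ) → C(X, ℝ)` lies in the image of
`C(N, ℝ)`, i.e. in the `C(N, ℝ)`-span of `1`. Hence `C(M, ℝ)` is finite over `C(N, ℝ)` exactly
when its quotient `C(X, ℝ)` is finite over `C(Y, ℝ)`. -/

open Function Topology

theorem Module.Finite.of_surjective_of_ker_le {R M N : Type*} [CommRing R] [AddCommGroup M]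
    [Module R M] [AddCommGroup N] [Module R N] [Module.Finite R N] {f : M →ₗ[R] N}
    (hf : Surjective f) {K : Submodule R M} (hK : K.FG) (hker : LinearMap.ker f ≤ K) :
    Module.Finite R M := by
  have : Module.Finite R K := Module.Finite.iff_fg.mpr hK
  have : Module.Finite R (M ⧸ LinearMap.ker f) := .equiv (f.quotKerEquivOfSurjective hf).symm
  have : Module.Finite R (M ⧸ K) := .of_surjective _ (Submodule.factor_surjective hker)
  exact .of_submodule_quotient K

theorem RingHom.Finite.of_comp_of_ker_le_range {A B C : Type*} [CommRing A] [CommRing B]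
    [CommRing C] {φ : A →+* B} {r : B →+* C} (hr : Surjective r)
    (hker : ∀ b, r b = 0 → b ∈ φ.range) (h : (r.comp φ).Finite) : φ.Finite := by
  let := φ.toAlgebra
  let := r.toAlgebra
  let := (r.comp φ).toAlgebra
  have : IsScalarTower A B C := .of_algebraMap_eq' rfl
  have : Module.Finite A C := h
  refine Module.Finite.of_surjective_of_ker_le (f := (Algebra.linearMap B C).restrictScalars A)
    hr (Submodule.fg_span_singleton 1) fun b hb => ?_
  obtain ⟨a, rfl⟩ := hker b hb
  exact Submodule.mem_span_singleton.mpr ⟨a, Algebra.algebraMap_eq_smul_one a |>.symm⟩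

theorem RingHom.finite_iff_of_comp_eq {A A' B B' : Type*} [CommRing A] [CommRing A']
    [CommRing B] [CommRing B'] {φ : A →+* B} {φ' : A' →+* B'} {σ : A →+* A'} {r : B →+* B'}
    (hcomm : r.comp φ = φ'.comp σ) (hσ : Surjective σ) (hr : Surjective r)
    (hker : ∀ b, r b = 0 → b ∈ φ.range) : φ.Finite ↔ φ'.Finite :=
  ⟨fun h => (hcomm ▸ (RingHom.Finite.of_surjective r hr).comp h).of_comp_finite,
    fun h => .of_comp_of_ker_le_range hr hker (hcomm ▸ h.comp (.of_surjective σ hσ))⟩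

theorem Set.InjOn.factorsThrough_of_const_on_preimage {α β γ : Type*} {f : α → β} {Y : Set β}
    (hinj : Set.InjOn f (f ⁻¹' Y)ᶜ) {g : α → γ} {c : γ} (hg : ∀ x ∈ f ⁻¹' Y, g x = c) :
    g.FactorsThrough f := by
  intro a b hab
  by_cases ha : a ∈ f ⁻¹' Y
  · have hb : b ∈ f ⁻¹' Y := by simpa only [Set.mem_preimage, hab] using ha
    rw [hg a ha, hg b hb]
  · have hb : b ∉ f ⁻¹' Y := by simpa only [Set.mem_preimage, hab] using ha
    rw [hinj ha hb hab]

theorem phiPi_restrict_surjective {X : Type*} [TopologicalSpace X] [NormalSpace X] {s : Set X}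
    (hs : IsClosed s) : Surjective (phiPi ((ContinuousMap.id X).restrict s)) :=
  fun g => (g.exists_restrict_eq hs).imp fun _ hf => hf

theorem mem_range_phiPi_of_eq_zero_on_preimage {M N : Type*} [TopologicalSpace M]
    [TopologicalSpace N] {π : C(M, N)} (hπ : IsQuotientMap π) {Y : Set N}
    (hinj : Set.InjOn π (⇑π ⁻¹' Y)ᶜ) {g : C(M, ℝ)} (hg : ∀ x ∈ ⇑π ⁻¹' Y, g x = 0) :
    g ∈ (phiPi π).range :=
  ⟨hπ.lift g (hinj.factorsThrough_of_const_on_preimage hg), hπ.lift_comp g _⟩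

/-- Let `M, N` be metric spaces, `π : M → N` continuous, closed and
surjective, `Y ⊆ N` closed, `X := π⁻¹(Y)`, and suppose `π` is injective on `M ∖ X`.
Then `C(M, ℝ)` is a finitely generated `C(N, ℝ)`-module via `φ_π` iff `C(X, ℝ)` is a
finitely generated `C(Y, ℝ)`-module via `g ↦ g ∘ (π|_X)`. -/
theorem finite_iff_finite_on_closed_part {M N : Type*} [MetricSpace M] [MetricSpace N]
    (π : C(M, N)) (hclosed : IsClosedMap π) (hsurj : Function.Surjective π)
    (Y : Set N) (hY : IsClosed Y) (hinj : Set.InjOn π (⇑π ⁻¹' Y)ᶜ) :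
    (phiPi π).Finite ↔
      (phiPi (⟨fun x : (⇑π ⁻¹' Y) => (⟨π x, x.2⟩ : Y),
        (π.continuous.comp continuous_subtype_val).subtype_mk _⟩ :
          C((⇑π ⁻¹' Y : Set M), (Y : Set N)))).Finite := by
  have hX : IsClosed (⇑π ⁻¹' Y) := hY.preimage π.continuous
  refine RingHom.finite_iff_of_comp_eq rfl (phiPi_restrict_surjective hY)
    (phiPi_restrict_surjective hX) fun g hg => ?_
  exact mem_range_phiPi_of_eq_zero_on_preimage (hclosed.isQuotientMap π.continuous hsurj) hinj
    fun x hx => DFunLike.congr_fun hg ⟨x, hx⟩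
end

section
/- Let M be a topological space and let (X₁,j₁), (X₂,j₂) be two compactifications of M by compact metrizable spaces, i.e. each jᵢ : M → Xᵢ is a topological embedding with dense image. Let π : X₂ → X₁ be a continuous map with π∘j₂ = j₁ (such π is automatically surjective and satisfies π⁻¹(X₁∖j₁(M)) = X₂∖j₂(M)). Write ∂Xᵢ := Xᵢ∖jᵢ(M) and suppose ∂X₁ is closed in X₁. Then C(X₂,ℝ) is a finitely generated C(X₁,ℝ)-module via f ↦ f∘π if and only if C(∂X₂,ℝ) is a finitely generated C(∂X₁,ℝ)-module via g ↦ g∘(π|_{∂X₂}). -/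
/-!
Restriction to the remainders gives surjections `C(Xᵢ, ℝ) → C(∂Xᵢ, ℝ)` (Tietze) that intertwine
composition with `π` and with `ρ`, so finiteness passes from `π` to `ρ`. Conversely, `π` is a
quotient map (compact to Hausdorff, surjective by density) which is injective off
`∂X₂ = π⁻¹(∂X₁)`, so every function on `X₂` vanishing on `∂X₂` factors through `π`. Hence lifts
of generators over the remainders, together with `1`, generate `C(X₂, ℝ)` over `C(X₁, ℝ)`.
-/

open ContinuousMap

theorem RingHom.finite_iff_exists_fin_sum_eq {A B : Type*} [CommRing A] [CommRing B]
    (φ : A →+* B) :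
    φ.Finite ↔ ∃ (n : ℕ) (g : Fin n → B), ∀ b, ∃ a : Fin n → A, ∑ i, φ (a i) * g i = b := by
  let := φ.toAlgebra
  have hsmul (a : A) (b : B) : a • b = φ a * b := Algebra.smul_def a b
  simp_rw [← hsmul, ← Submodule.mem_span_range_iff_exists_fun, ← Submodule.eq_top_iff']
  exact ⟨fun h => @Module.Finite.exists_fin _ _ _ _ _ h,
    fun ⟨n, g, hg⟩ => ⟨hg ▸ Submodule.fg_span (Set.finite_range g)⟩⟩

theorem RingHom.finite_iff_of_comp_eq_comp {A B A' B' : Type*} [CommRing A] [CommRing B]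
    [CommRing A'] [CommRing B'] {φ : A →+* B} {φ' : A' →+* B'} {rA : A →+* A'} {rB : B →+* B'}
    (hrA : Function.Surjective rA) (hrB : Function.Surjective rB)
    (hcomm : rB.comp φ = φ'.comp rA) (hker : ∀ b, rB b = 0 → b ∈ φ.range) :
    φ.Finite ↔ φ'.Finite := by
  refine ⟨fun h => .of_comp_finite (hcomm ▸ (Finite.of_surjective rB hrB).comp h), fun h => ?_⟩
  have hcomm' (x : A) : rB (φ x) = φ' (rA x) := DFunLike.congr_fun hcomm x
  obtain ⟨n, g, hg⟩ := φ'.finite_iff_exists_fin_sum_eq.mp h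
  choose G hG using fun i => hrB (g i)
  rw [finite_iff_exists_fin_sum_eq]
  refine ⟨n + 1, Fin.cons 1 G, fun b => ?_⟩
  obtain ⟨a', ha'⟩ := hg (rB b)
  choose a ha using fun i => hrA (a' i)
  -- `b` agrees with a combination of the lifts `G i` up to an element of `ker rB ⊆ range φ`
  obtain ⟨a₀, ha₀⟩ := hker (b - ∑ i, φ (a i) * G i) <| by simp [← ha', ← ha, hG, hcomm']
  exact ⟨Fin.cons a₀ a, by simp [Fin.sum_univ_succ, ha₀]⟩

section phiPi

variable {X Y Z : Type*} [TopologicalSpace X] [TopologicalSpace Y] [TopologicalSpace Z]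

theorem phiPi_comp (g : C(Y, Z)) (f : C(X, Y)) : phiPi (g.comp f) = (phiPi f).comp (phiPi g) :=
  rfl

theorem phiPi_surjective [NormalSpace Y] {e : C(X, Y)} (he : Topology.IsClosedEmbedding e) :
    Function.Surjective (phiPi e) :=
  fun f => f.exists_extension he

theorem mem_range_phiPi_of_injOn {π : C(X, Y)} (hπ : Topology.IsQuotientMap π) {s : Set Y}
    (hinj : Set.InjOn π (π ⁻¹' s)ᶜ) {h : C(X, ℝ)} (hs : ∀ x, π x ∈ s → h x = 0) :
    h ∈ (phiPi π).range := by
  refine ⟨hπ.lift h fun x y hxy => ?_, hπ.lift_comp h _⟩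
  by_cases hx : π x ∈ s
  · rw [hs x hx, hs y (hxy ▸ hx)]
  · rw [hinj hx (hxy ▸ hx : π y ∉ s) hxy]

end phiPi

theorem DenseRange.surjective_of_isClosed {α β : Type*} [TopologicalSpace α] {f : β → α}
    (hd : DenseRange f) (hf : IsClosed (Set.range f)) : Function.Surjective f := by
  rw [← Set.range_eq_univ, ← hf.closure_eq, hd.closure_range]

theorem finite_iff_finite_on_remainder_general {M X₁ X₂ : Type*} [TopologicalSpace M]
    [TopologicalSpace X₁] [TopologicalSpace.MetrizableSpace X₁]
    [TopologicalSpace X₂] [CompactSpace X₂] [TopologicalSpace.MetrizableSpace X₂]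
    (j₁ : C(M, X₁)) (j₂ : C(M, X₂))
    (he₁ : Topology.IsEmbedding j₁)
    (hd₁ : DenseRange j₁)
    (π : C(X₂, X₁)) (hπ : ∀ x : M, π (j₂ x) = j₁ x)
    (hcl : IsClosed (Set.range j₁)ᶜ)
    (ρ : C(((Set.range j₂)ᶜ : Set X₂), ((Set.range j₁)ᶜ : Set X₁)))
    (hρ : ∀ x : ((Set.range j₂)ᶜ : Set X₂), (ρ x : X₁) = π (x : X₂)) :
    (phiPi π).Finite ↔ (phiPi ρ).Finite := by
  have hπj : ⇑π ∘ ⇑j₂ = ⇑j₁ := funext hπ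
  have hpre : π ⁻¹' (Set.range j₁)ᶜ = (Set.range j₂)ᶜ := by
    ext x
    refine ⟨?_, fun hx => (hρ ⟨x, hx⟩ ▸ (ρ ⟨x, hx⟩).2 : π x ∈ _)⟩
    rintro hx ⟨m, rfl⟩
    exact hx ⟨m, (hπ m).symm⟩
  have hsurj : Function.Surjective π :=
    (hπj ▸ hd₁).of_comp.surjective_of_isClosed (isCompact_range π.continuous).isClosed
  have hinj : Set.InjOn π (π ⁻¹' (Set.range j₁)ᶜ)ᶜ := by
    rw [hpre, compl_compl]
    exact Function.Injective.injOn_range (hπj ▸ he₁.injective)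
  refine RingHom.finite_iff_of_comp_eq_comp (rA := phiPi ⟨Subtype.val, continuous_subtype_val⟩)
    (rB := phiPi ⟨Subtype.val, continuous_subtype_val⟩)
    (phiPi_surjective hcl.isClosedEmbedding_subtypeVal)
    (phiPi_surjective (hpre ▸ hcl.preimage π.continuous).isClosedEmbedding_subtypeVal)
    (by rw [← phiPi_comp, ← phiPi_comp]; congr 1; ext x; exact (hρ x).symm) fun h hh => ?_
  exact mem_range_phiPi_of_injOn (.of_surjective_continuous hsurj π.continuous) hinj
    fun x hx => DFunLike.congr_fun hh ⟨x, hpre ▸ hx⟩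

/-- Let `(X₁, j₁)` and `(X₂, j₂)` be compactifications of `M` by
compact metrizable spaces and let `π : X₂ → X₁` be continuous with `π ∘ j₂ = j₁`.
Write `∂Xᵢ := Xᵢ ∖ jᵢ(M)` (so `π` restricts to a map `ρ : ∂X₂ → ∂X₁`) and suppose
`∂X₁` is closed in `X₁`. Then `C(X₂, ℝ)` is a finitely generated `C(X₁, ℝ)`-module via
`f ↦ f ∘ π` iff `C(∂X₂, ℝ)` is a finitely generated `C(∂X₁, ℝ)`-module via
`g ↦ g ∘ ρ`. -/
theorem finite_iff_finite_on_remainder {M X₁ X₂ : Type*} [TopologicalSpace M]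
    [TopologicalSpace X₁] [CompactSpace X₁] [TopologicalSpace.MetrizableSpace X₁]
    [TopologicalSpace X₂] [CompactSpace X₂] [TopologicalSpace.MetrizableSpace X₂]
    (j₁ : C(M, X₁)) (j₂ : C(M, X₂))
    (he₁ : Topology.IsEmbedding j₁) (he₂ : Topology.IsEmbedding j₂)
    (hd₁ : DenseRange j₁) (hd₂ : DenseRange j₂)
    (π : C(X₂, X₁)) (hπ : ∀ x : M, π (j₂ x) = j₁ x)
    (hcl : IsClosed (Set.range j₁)ᶜ)
    (ρ : C(((Set.range j₂)ᶜ : Set X₂), ((Set.range j₁)ᶜ : Set X₁)))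
    (hρ : ∀ x : ((Set.range j₂)ᶜ : Set X₂), (ρ x : X₁) = π (x : X₂)) :
    (phiPi π).Finite ↔ (phiPi ρ).Finite :=
  finite_iff_finite_on_remainder_general j₁ j₂ he₁ hd₁ π hπ hcl ρ hρ
end

section
/- Let M be a topological space, N a metric space and π : M → N a continuous closed map. Suppose there is a finite cover M = M₁ ∪ ⋯ ∪ M_k by closed subsets such that each restriction π|_{M_i} is injective. Then every f ∈ C(M,ℝ) is integral over C(N,ℝ) via φ_π : C(N,ℝ) → C(M,ℝ), g ↦ g∘π; in fact there exist g₁,…,g_k ∈ C(N,ℝ) with ∏_{i=1}^k (f − g_i∘π) = 0. -/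
open ContinuousMap Topology Set

/-! On each `Mᵢ` the closed map `π` is a closed embedding, so by Tietze `f|_{Mᵢ}` factors as
`gᵢ ∘ π` with `gᵢ ∈ C(N, ℝ)`. Every point lies in some `Mᵢ`, where the factor `f - gᵢ ∘ π`
vanishes, so the product vanishes and `f` is a root of the monic `∏ i, (X - C gᵢ)`. -/

theorem RingHom.isIntegralElem_of_prod_sub_eq_zero {R S ι : Type*} [CommRing R] [CommRing S]
    (φ : R →+* S) (s : Finset ι) {x : S} (g : ι → R) (h : ∏ i ∈ s, (x - φ (g i)) = 0) :
    φ.IsIntegralElem x := by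
  refine ⟨∏ i ∈ s, (Polynomial.X - Polynomial.C (g i)),
    Polynomial.monic_prod_of_monic _ _ fun i _ => Polynomial.monic_X_sub_C (g i), ?_⟩
  simpa [Polynomial.eval₂_finsetProd] using h

theorem Set.InjOn.isClosedEmbedding_domRestrict {X Y : Type*} [TopologicalSpace X]
    [TopologicalSpace Y] {π : X → Y} {s : Set X} (hinj : InjOn π s) (hπ : Continuous π)
    (hclosed : IsClosedMap π) (hs : IsClosed s) : IsClosedEmbedding (s.domRestrict π) :=
  .of_continuous_injective_isClosedMap (hπ.comp continuous_subtype_val) hinj.injective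
    (hclosed.domRestrict hs)

theorem ContinuousMap.exists_eqOn_comp_of_injOn.{u, v, w} {M : Type u} {N : Type v} {Y : Type w}
    [TopologicalSpace M] [TopologicalSpace N] [NormalSpace N] [TopologicalSpace Y]
    [TietzeExtension.{v} Y]
    (π : C(M, N)) (hclosed : IsClosedMap π) {s : Set M} (hs : IsClosed s) (hinj : InjOn π s)
    (f : C(M, Y)) : ∃ g : C(N, Y), EqOn (g ∘ π) f s := by
  obtain ⟨g, hg⟩ := (f.restrict s).exists_extension'
    (hinj.isClosedEmbedding_domRestrict π.continuous hclosed hs)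
  exact ⟨g, fun x hx => congrFun hg ⟨x, hx⟩⟩

theorem prod_sub_phiPi_eq_zero {M N ι : Type*} [TopologicalSpace M] [TopologicalSpace N]
    [Fintype ι] (π : C(M, N)) {s : ι → Set M} (hcover : ⋃ i, s i = univ) {f : C(M, ℝ)}
    {g : ι → C(N, ℝ)} (hg : ∀ i, EqOn (g i ∘ π) f (s i)) :
    ∏ i, (f - phiPi π (g i)) = 0 := by
  ext x
  obtain ⟨i, hi⟩ := mem_iUnion.mp (hcover.symm ▸ mem_univ x : x ∈ ⋃ i, s i)
  rw [ContinuousMap.prod_apply]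
  refine Finset.prod_eq_zero (Finset.mem_univ i) ?_
  simpa [phiPi, sub_eq_zero] using (hg i hi).symm

/-- Let `M` be a topological space, `N` a metric space and
`π : M → N` a continuous closed map. If `M = M₁ ∪ ⋯ ∪ M_k` is a finite cover by
closed subsets with each `π|_{M_i}` injective, then every `f ∈ C(M, ℝ)` is integral
over `C(N, ℝ)` via `φ_π`; in fact there are `g₁, …, g_k ∈ C(N, ℝ)` with
`∏ i, (f - g_i ∘ π) = 0`. -/
theorem integral_of_finite_closed_cover {M N : Type*} [TopologicalSpace M]
    [MetricSpace N] (π : C(M, N)) (hclosed : IsClosedMap π)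
    (k : ℕ) (Mi : Fin k → Set M) (hMi : ∀ i, IsClosed (Mi i))
    (hcover : (⋃ i, Mi i) = Set.univ) (hinj : ∀ i, Set.InjOn π (Mi i))
    (f : C(M, ℝ)) :
    (phiPi π).IsIntegralElem f ∧
      ∃ g : Fin k → C(N, ℝ), ∏ i, (f - phiPi π (g i)) = 0 := by
  choose g hg using fun i => exists_eqOn_comp_of_injOn π hclosed (hMi i) (hinj i) f
  have hprod := prod_sub_phiPi_eq_zero π hcover hg
  exact ⟨(phiPi π).isIntegralElem_of_prod_sub_eq_zero Finset.univ g hprod, g, hprod⟩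
end

section
/- Let π : ℝ → ℝ be the map t ↦ √(1+t²) − t. Then the ring homomorphism φ_π : C(ℝ,ℝ) → C(ℝ,ℝ), f ↦ f∘π, is not integral; in particular the identity function id_ℝ ∈ C(ℝ,ℝ) is not integral over C(ℝ,ℝ) via φ_π. -/
open ContinuousMap

/-- The continuous map `π : ℝ → ℝ`, `t ↦ √(1 + t²) − t`. -/
noncomputable def sqrtShift : C(ℝ, ℝ) :=
  ⟨fun t => Real.sqrt (1 + t ^ 2) - t, by fun_prop⟩

/-!
Evaluating an integral equation `gⁿ + (f₁ ∘ π) gⁿ⁻¹ + ⋯ + (fₙ ∘ π) = 0` at a point `x` makes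
`g x` a root of a monic real polynomial whose coefficients are the values `fᵢ (π x)`. By
Cauchy's bound, `g` is therefore bounded wherever `π` stays in a compact set. For
`π t = √(1 + t²) − t` this set contains `[0, ∞)`, where the identity is unbounded.
-/

open Polynomial

theorem Polynomial.Monic.norm_lt_of_isRoot {K : Type*} [NormedDivisionRing K] {p : K[X]}
    (hp : p.Monic) {a : K} (ha : p.IsRoot a) {C : ℝ}
    (hC : ∀ i < p.natDegree, ‖p.coeff i‖ ≤ C) : ‖a‖ < C + 1 := by
  have hC0 : 0 ≤ C := by
    rcases Nat.eq_zero_or_pos p.natDegree with h0 | hpos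
    · simp [hp.natDegree_eq_zero.mp h0] at ha
    · exact (norm_nonneg _).trans (hC 0 hpos)
  have hbound : cauchyBound p ≤ ⟨C, hC0⟩ + 1 := by
    rw [cauchyBound, hp.leadingCoeff, nnnorm_one, div_one]
    refine add_le_add_left (Finset.sup_le fun i hi => ?_) 1
    exact NNReal.coe_le_coe.mp (hC i (Finset.mem_range.mp hi))
  exact_mod_cast (ha.norm_lt_cauchyBound hp.ne_zero).trans_le hbound

theorem isBounded_image_preimage_of_isIntegralElem_phiPi {M N : Type*} [TopologicalSpace M]
    [TopologicalSpace N] {π : C(M, N)} {g : C(M, ℝ)} (hg : (phiPi π).IsIntegralElem g)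
    {K : Set N} (hK : IsCompact K) : Bornology.IsBounded (g '' (π ⁻¹' K)) := by
  obtain ⟨p, hm, hp⟩ := hg
  have hroot (x : M) : (p.map (evalAlgHom ℝ ℝ (π x)).toRingHom).IsRoot (g x) := by
    have := congrArg (evalAlgHom ℝ ℝ x).toRingHom hp
    rw [hom_eval₂, map_zero] at this
    rw [IsRoot.def, eval_map]
    exact this
  obtain ⟨C, hC⟩ : ∃ C, ∀ i < p.natDegree, ∀ y ∈ K, ‖p.coeff i y‖ ≤ C := by
    have hcpt : IsCompact (⋃ i ∈ Finset.range p.natDegree, p.coeff i '' K) :=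
      (Finset.range _).isCompact_biUnion fun i _ => hK.image (p.coeff i).continuous
    obtain ⟨C, hC⟩ := isBounded_iff_forall_norm_le.mp hcpt.isBounded
    exact ⟨C, fun i hi y hy =>
      hC _ (Set.mem_iUnion₂.mpr ⟨i, Finset.mem_range.mpr hi, Set.mem_image_of_mem _ hy⟩)⟩
  refine isBounded_iff_forall_norm_le.mpr ⟨C + 1, ?_⟩
  rintro _ ⟨x, hx, rfl⟩
  refine ((hm.map _).norm_lt_of_isRoot (hroot x) fun i hi => ?_).le
  rw [coeff_map]
  exact hC i (by rwa [hm.natDegree_map] at hi) (π x) hx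

theorem mapsTo_sqrtShift_Ici : Set.MapsTo sqrtShift (Set.Ici 0) (Set.Icc 0 1) := by
  intro t (ht : 0 ≤ t)
  have hlow : t ≤ √(1 + t ^ 2) := Real.le_sqrt_of_sq_le (by linarith)
  have hup : √(1 + t ^ 2) ≤ 1 + t := Real.sqrt_le_iff.mpr ⟨by linarith, by nlinarith⟩
  exact ⟨sub_nonneg.mpr hlow, by change √(1 + t ^ 2) - t ≤ 1; linarith⟩

/-- For `π : ℝ → ℝ`, `t ↦ √(1 + t²) − t`, the ring homomorphism
`φ_π : C(ℝ, ℝ) → C(ℝ, ℝ)`, `f ↦ f ∘ π`, is not integral; in particular the identity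
function is not integral over `C(ℝ, ℝ)` via `φ_π`. -/
theorem sqrtShift_not_integral :
    ¬(phiPi sqrtShift).IsIntegral ∧
      ¬(phiPi sqrtShift).IsIntegralElem (ContinuousMap.id ℝ) := by
  have hid : ¬(phiPi sqrtShift).IsIntegralElem (ContinuousMap.id ℝ) := fun h => by
    have hbdd := (isBounded_image_preimage_of_isIntegralElem_phiPi h isCompact_Icc).subset
      fun t ht => ⟨t, mapsTo_sqrtShift_Ici ht, rfl⟩
    exact not_bddAbove_Ici (0 : ℝ) hbdd.bddAbove
  exact ⟨fun h => hid (h _), hid⟩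
end

section
/- Let M, N be compact metric spaces and let π : M → N be a continuous map that is locally injective, i.e. every point of M has an open neighbourhood on which π is injective. Then C(M,ℝ) is a finitely generated module over C(N,ℝ) via the ring homomorphism φ_π : C(N,ℝ) → C(M,ℝ), f ↦ f∘π. -/
/-!
Cover `M` by finitely many open sets on which `π` is injective and choose continuous `s i` with
`∑ i, s i ^ 2 = 1` and `tsupport (s i)` inside the `i`-th set (square roots of a partition of
unity). Since `π` restricted to the compact set `tsupport (s i)` is a closed embedding, Tietze
gives `h i : C(N, ℝ)` with `h i ∘ π = s i * f` there, so `f = ∑ i, (h i ∘ π) * s i`: the `s i`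
generate `C(M, ℝ)` over `C(N, ℝ)`.
-/

open ContinuousMap

@[simp]
theorem phiPi_apply {X Y : Type*} [TopologicalSpace X] [TopologicalSpace Y] (π : C(X, Y))
    (f : C(Y, ℝ)) (x : X) : phiPi π f x = f (π x) :=
  rfl

theorem ContinuousMap.exists_comp_eqOn_of_injOn {X Y : Type*} [TopologicalSpace X]
    [TopologicalSpace Y] [NormalSpace Y] [T2Space Y] (π : C(X, Y)) {K : Set X}
    (hK : IsCompact K) (hinj : K.InjOn π) (g : C(X, ℝ)) :
    ∃ h : C(Y, ℝ), ∀ x ∈ K, h (π x) = g x := by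
  have : CompactSpace K := isCompact_iff_compactSpace.mp hK
  have hemb : Topology.IsClosedEmbedding (K.domRestrict π) :=
    (π.continuous.comp continuous_subtype_val).isClosedEmbedding hinj.injective
  obtain ⟨h, hh⟩ := (g.restrict K).exists_extension' hemb
  exact ⟨h, fun x hx => congr_fun hh ⟨x, hx⟩⟩

theorem exists_sum_mul_self_eq_one_tsupport_subset {X ι : Type*} [TopologicalSpace X]
    [CompactSpace X] [T2Space X] [Fintype ι] (U : ι → Set X) (hU : ∀ i, IsOpen (U i))
    (hcover : ⋃ i, U i = Set.univ) :
    ∃ s : ι → C(X, ℝ), ∑ i, s i * s i = 1 ∧ ∀ i, tsupport (s i) ⊆ U i := by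
  obtain ⟨ρ, hρ⟩ := PartitionOfUnity.exists_isSubordinate isClosed_univ U hU hcover.ge
  refine ⟨fun i => ⟨fun x => √(ρ i x), by fun_prop⟩, ?_, fun i => ?_⟩
  · ext x
    have hsum : ∑ i, ρ i x = 1 := by
      rw [← finsum_eq_sum_of_fintype]
      exact ρ.sum_eq_one (Set.mem_univ x)
    simpa [Real.mul_self_sqrt (ρ.nonneg _ x)] using hsum
  · exact (tsupport_comp_subset Real.sqrt_zero (ρ i)).trans (hρ i)

theorem phiPi_finite_of_sum_mul_self_eq_one {X Y ι : Type*} [TopologicalSpace X]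
    [TopologicalSpace Y] [NormalSpace Y] [T2Space Y] [Fintype ι] (π : C(X, Y))
    (s : ι → C(X, ℝ)) (hs : ∑ i, s i * s i = 1) (hcpt : ∀ i, IsCompact (tsupport (s i)))
    (hinj : ∀ i, (tsupport (s i)).InjOn π) : (phiPi π).Finite := by
  let _ : Algebra C(Y, ℝ) C(X, ℝ) := (phiPi π).toAlgebra
  change Module.Finite C(Y, ℝ) C(X, ℝ)
  refine ⟨Submodule.fg_def.mpr ⟨Set.range s, Set.finite_range s, eq_top_iff.mpr ?_⟩⟩
  rintro f -
  choose h hh using fun i => π.exists_comp_eqOn_of_injOn (hcpt i) (hinj i) (s i * f)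
  have hterm : ∀ i x, h i (π x) * s i x = s i x * s i x * f x := by
    intro i x
    by_cases hx : x ∈ tsupport (s i)
    · rw [hh i x hx, mul_apply]
      ring
    · simp [image_eq_zero_of_notMem_tsupport hx]
  have hf : f = ∑ i, h i • s i := by
    ext x
    have hsx := congr($hs x)
    simp only [ContinuousMap.sum_apply, mul_apply, one_apply] at hsx
    simp only [ContinuousMap.sum_apply, Algebra.smul_def, RingHom.algebraMap_toAlgebra,
      mul_apply, phiPi_apply]
    rw [Finset.sum_congr rfl fun i _ => hterm i x, ← Finset.sum_mul, hsx, one_mul]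
  rw [hf]
  exact Submodule.sum_mem _ fun i _ => Submodule.smul_mem _ _ (Submodule.subset_span ⟨i, rfl⟩)

theorem finite_of_locally_injective_general {M N : Type*} [MetricSpace M] [CompactSpace M]
    [MetricSpace N] (π : C(M, N))
    (hloc : ∀ x : M, ∃ U : Set M, IsOpen U ∧ x ∈ U ∧ Set.InjOn π U) :
    (phiPi π).Finite := by
  choose V hVopen hVmem hVinj using hloc
  obtain ⟨t, ht⟩ := finite_cover_nhds fun x => (hVopen x).mem_nhds (hVmem x)
  obtain ⟨s, hs, hsupp⟩ := exists_sum_mul_self_eq_one_tsupport_subset (fun i : t => V i)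
    (fun i => hVopen i) (by simpa [Set.iUnion_subtype] using ht)
  exact phiPi_finite_of_sum_mul_self_eq_one π s hs (fun i => (isClosed_tsupport _).isCompact)
    fun i => (hVinj i).mono (hsupp i)

/-- Let `M, N` be compact metric spaces and `π : M → N` a locally
injective continuous map. Then `C(M, ℝ)` is a finitely generated `C(N, ℝ)`-module via
`φ_π`. -/
theorem finite_of_locally_injective {M N : Type*} [MetricSpace M] [CompactSpace M]
    [MetricSpace N] [CompactSpace N] (π : C(M, N))
    (hloc : ∀ x : M, ∃ U : Set M, IsOpen U ∧ x ∈ U ∧ Set.InjOn π U) :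
    (phiPi π).Finite :=
  finite_of_locally_injective_general π hloc
end

section
/- Let M be a topological space and let f₁,…,fₙ ∈ C(M,ℝ). Suppose that for every point x ∈ M the monic polynomial tⁿ + f₁(x)t^{n−1} + ⋯ + fₙ(x) ∈ ℝ[t] splits in ℝ[t] as a product of (not necessarily distinct) degree-one factors. Then there exist g₁,…,gₙ ∈ C(M,ℝ) such that for every x ∈ M one has tⁿ + Σ_{j=1}^n f_j(x)t^{n−j} = ∏_{j=1}^n (t − g_j(x)) in ℝ[t]. -/
open Polynomial

/-! Sort the roots at each point. On monotone tuples, the map sending the roots to the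
coefficients of `∏ (X - C rᵢ)` is continuous, injective (a multiset of reals has only one
sorted enumeration) and proper (Cauchy's bound controls the roots by the coefficients), hence a
closed embedding. The coefficients at `x` depend continuously on `x`, and therefore so do the
sorted roots. -/

theorem coeff_X_pow_add_sum_C_mul_X_pow {R : Type*} [Semiring R] {n : ℕ} (c : Fin n → R)
    (m : Fin n) :
    (X ^ n + ∑ j : Fin n, C (c j) * X ^ (n - 1 - (j : ℕ))).coeff m = c m.rev := by
  have hrev (j : Fin n) : (m : ℕ) = n - 1 - j ↔ m.rev = j := by
    rw [Fin.ext_iff, Fin.val_rev]; omega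
  simp [coeff_X_pow, finsetSum_coeff, m.isLt.ne, hrev]

section

variable {R : Type*} [CommRing R]

noncomputable def coeffsOfRoots (n : ℕ) (r : Fin n → R) : Fin n → R :=
  fun j => (∏ i, (X - C (r i))).coeff j

theorem continuous_coeff_prod_X_sub_C [TopologicalSpace R] [IsTopologicalRing R]
    {ι : Type*} (s : Finset ι) (k : ℕ) :
    Continuous fun r : ι → R => (∏ i ∈ s, (X - C (r i))).coeff k := by
  have h (r : ι → R) : (∏ i ∈ s, (X - C (r i))).coeff k =
      MvPolynomial.eval r
        ((∏ i ∈ s, (X - C (MvPolynomial.X i)) : (MvPolynomial ι R)[X]).coeff k) := by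
    rw [← coeff_map, Polynomial.map_prod]
    simp
  simp_rw [h]
  exact MvPolynomial.continuous_eval _

theorem continuous_coeffsOfRoots [TopologicalSpace R] [IsTopologicalRing R] (n : ℕ) :
    Continuous (coeffsOfRoots (R := R) n) :=
  continuous_pi fun _ => continuous_coeff_prod_X_sub_C _ _

theorem roots_finset_prod_X_sub_C [IsDomain R] {ι : Type*} (s : Finset ι) (r : ι → R) :
    (∏ i ∈ s, (X - C (r i))).roots = s.val.map r := by
  rw [roots_prod _ _ (Finset.prod_ne_zero_iff.mpr fun i _ => X_sub_C_ne_zero (r i))]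
  simp [Multiset.bind_singleton]

theorem prod_X_sub_C_eq_of_coeffsOfRoots_eq [Nontrivial R] {n : ℕ} {r s : Fin n → R}
    (h : coeffsOfRoots n r = coeffsOfRoots n s) :
    ∏ i, (X - C (r i)) = ∏ i, (X - C (s i)) := by
  have hdeg (t : Fin n → R) : (∏ i, (X - C (t i))).natDegree = n := by simp
  have hlead (t : Fin n → R) : (∏ i, (X - C (t i))).coeff n = 1 := by
    simpa [hdeg] using (monic_prod_X_sub_C t Finset.univ).coeff_natDegree
  ext k
  rcases lt_trichotomy k n with hk | rfl | hk
  · exact congrFun h ⟨k, hk⟩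
  · rw [hlead, hlead]
  · rw [coeff_eq_zero_of_natDegree_lt (by rwa [hdeg]),
      coeff_eq_zero_of_natDegree_lt (by rwa [hdeg])]

theorem injOn_coeffsOfRoots_monotone [IsDomain R] [LinearOrder R] (n : ℕ) :
    Set.InjOn (coeffsOfRoots (R := R) n) {r | Monotone r} := by
  intro r hr s hs h
  have hroots := congrArg roots (prod_X_sub_C_eq_of_coeffsOfRoots_eq h)
  rw [roots_finset_prod_X_sub_C, roots_finset_prod_X_sub_C, Fin.univ_val_map, Fin.univ_val_map,
    Multiset.coe_eq_coe] at hroots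
  exact List.ofFn_injective (hroots.eq_of_sortedLE hr.sortedLE_ofFn hs.sortedLE_ofFn)

theorem exists_monotone_prod_X_sub_C_eq [LinearOrder R] {n : ℕ} (r : Fin n → R) :
    ∃ s : Fin n → R, Monotone s ∧ ∏ i, (X - C (s i)) = ∏ i, (X - C (r i)) :=
  ⟨r ∘ Tuple.sort r, Tuple.monotone_sort r,
    Equiv.prod_comp (Tuple.sort r) fun i => X - C (r i)⟩

end

section

variable {K : Type*} [NormedField K]

theorem norm_le_norm_coeffsOfRoots_add_one {n : ℕ} (r : Fin n → K) :
    ‖r‖ ≤ ‖coeffsOfRoots n r‖ + 1 := by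
  set p : K[X] := ∏ i, (X - C (r i))
  have hp : p.Monic := monic_prod_X_sub_C r Finset.univ
  have hbound : cauchyBound p ≤ ‖coeffsOfRoots n r‖₊ + 1 := by
    rw [cauchyBound, hp.leadingCoeff, nnnorm_one, div_one, add_le_add_iff_right]
    refine Finset.sup_le fun j hj => ?_
    have hj : j < n := by simpa [p] using hj
    exact nnnorm_le_pi_nnnorm (coeffsOfRoots n r) ⟨j, hj⟩
  refine (pi_norm_le_iff_of_nonneg (by positivity)).mpr fun i => ?_
  have hroot : p.IsRoot (r i) := by
    simp [p, eval_prod, Finset.prod_eq_zero_iff, sub_eq_zero]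
  exact_mod_cast ((hroot.norm_lt_cauchyBound hp.ne_zero).trans_le hbound).le

theorem isProperMap_coeffsOfRoots [ProperSpace K] (n : ℕ) :
    IsProperMap (coeffsOfRoots (R := K) n) := by
  refine isProperMap_iff_tendsto_cocompact.mpr ⟨continuous_coeffsOfRoots n, ?_⟩
  rw [← Metric.cobounded_eq_cocompact, ← tendsto_norm_atTop_iff_cobounded]
  refine Filter.tendsto_atTop_mono
    (fun r => sub_le_iff_le_add.mpr (norm_le_norm_coeffsOfRoots_add_one r)) ?_
  exact Filter.tendsto_atTop_add_const_right _ (-1) tendsto_norm_cobounded_atTop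

end

theorem isClosedEmbedding_coeffsOfRoots_monotone (n : ℕ) :
    Topology.IsClosedEmbedding fun r : {r : Fin n → ℝ | Monotone r} => coeffsOfRoots n r.1 :=
  .of_continuous_injective_isClosedMap
    ((continuous_coeffsOfRoots n).comp continuous_subtype_val)
    (injOn_coeffsOfRoots_monotone n).injective
    ((isProperMap_coeffsOfRoots n).restrict isClosed_monotone).isClosedMap

theorem continuous_of_monotone_of_continuous_coeffsOfRoots {M : Type*} [TopologicalSpace M]
    {n : ℕ} {s : M → Fin n → ℝ} (hmono : ∀ x, Monotone (s x))
    (hcont : Continuous fun x => coeffsOfRoots n (s x)) : Continuous s := by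
  let sorted : M → {r : Fin n → ℝ | Monotone r} := fun x => ⟨s x, hmono x⟩
  have hsorted : Continuous sorted :=
    (isClosedEmbedding_coeffsOfRoots_monotone n).isInducing.continuous_iff.mpr hcont
  exact continuous_subtype_val.comp hsorted

/-- Let `M` be a topological space and `f₁, …, fₙ ∈ C(M, ℝ)`.
If for every `x ∈ M` the monic polynomial `tⁿ + f₁(x) t^{n-1} + ⋯ + fₙ(x)` splits over
`ℝ` into degree-one factors, then there are `g₁, …, gₙ ∈ C(M, ℝ)` with
`tⁿ + ∑ⱼ fⱼ(x) t^{n-j} = ∏ⱼ (t − gⱼ(x))` for all `x ∈ M`. -/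
theorem continuous_roots_of_pointwise_split {M : Type*} [TopologicalSpace M]
    (n : ℕ) (f : Fin n → C(M, ℝ))
    (hsplit : ∀ x : M, ∃ r : Fin n → ℝ,
      (X ^ n + ∑ j : Fin n, C (f j x) * X ^ (n - 1 - (j : ℕ)) : ℝ[X]) =
        ∏ j : Fin n, (X - C (r j))) :
    ∃ g : Fin n → C(M, ℝ), ∀ x : M,
      (X ^ n + ∑ j : Fin n, C (f j x) * X ^ (n - 1 - (j : ℕ)) : ℝ[X]) =
        ∏ j : Fin n, (X - C (g j x)) := by
  have hsorted (x : M) : ∃ s : Fin n → ℝ, Monotone s ∧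
      (X ^ n + ∑ j : Fin n, C (f j x) * X ^ (n - 1 - (j : ℕ)) : ℝ[X]) =
        ∏ j : Fin n, (X - C (s j)) := by
    obtain ⟨r, hr⟩ := hsplit x
    obtain ⟨s, hs, hsr⟩ := exists_monotone_prod_X_sub_C_eq r
    exact ⟨s, hs, hr.trans hsr.symm⟩
  choose s hmono hs using hsorted
  have hcoeffs : (fun x => coeffsOfRoots n (s x)) = fun x m => f m.rev x := by
    ext x m
    rw [coeffsOfRoots, ← hs x, coeff_X_pow_add_sum_C_mul_X_pow]
  have hcont : Continuous s := continuous_of_monotone_of_continuous_coeffsOfRoots hmono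
    (hcoeffs ▸ continuous_pi fun m => (f m.rev).continuous)
  exact ⟨fun j => ⟨fun x => s x j, (continuous_apply j).comp hcont⟩, hs⟩
end

section
/- Let M and N be metric spaces and π : M → N a continuous, closed and surjective map. Let f₁,…,f_k ∈ C(M,ℝ) be such that each f_i is integral over C(N,ℝ) via φ_π, and suppose the subring of C(M,ℝ) generated by the image of φ_π together with f₁,…,f_k separates the points of M. Then there exists a finite cover M = M₁ ∪ ⋯ ∪ M_r by closed subsets such that each restriction π|_{M_i} is injective; in particular, every element of C(M,ℝ) is integral over C(N,ℝ) via φ_π. -/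
/-!
For each `fᵢ` fix a monic `Pᵢ` over `C(N, ℝ)` killing it, and let `rootRank` count the complex
roots of `Pᵢ(π x)` with real part `< fᵢ(x)`. Continuity of roots makes `#{Re < t}` lower and
`#{Re ≤ t}` upper semicontinuous in the point and in `t`, and since `fᵢ(x)` is itself a root of
`Pᵢ(π x)`, the rank at `x` is strictly below `#{Re ≤ fᵢ(x)}`. Hence if `p, q` lie in the closure of
one level set `{rootRank = c}`, `π p = π q` and `fᵢ p < fᵢ q`, then
`c < #{Re ≤ fᵢ p} ≤ #{Re < fᵢ q} ≤ c`. So the `fᵢ`, and with them the whole separating subring,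
cannot tell such `p, q` apart: `π` is injective on the closures of the finitely many level sets of
the rank vector. On a closed piece where `π` is injective it is a closed embedding, so by Tietze
any `g ∈ C(M, ℝ)` agrees there with some `hⱼ ∘ π`, and `g` is a root of `∏ⱼ (X - hⱼ)`.
-/

open ContinuousMap

open Polynomial Filter Topology

theorem Multiset.exists_eq_map_univ_fin {α : Type*} {s : Multiset α} {n : ℕ}
    (hs : Multiset.card s = n) : ∃ z : Fin n → α, s = Finset.univ.val.map z := by
  induction s using Quotient.inductionOn with
  | h l =>
    obtain rfl : l.length = n := hs
    exact ⟨l.get, by rw [Fin.univ_val_map, List.ofFn_get]; rfl⟩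

theorem Multiset.card_filter_map_univ_le {ι α : Type*} [Fintype ι] {p q : α → Prop}
    [DecidablePred p] [DecidablePred q] {z w : ι → α} (h : ∀ j, p (z j) → q (w j)) :
    Multiset.card ((Finset.univ.val.map z).filter p) ≤
      Multiset.card ((Finset.univ.val.map w).filter q) := by
  simp only [Multiset.filter_map, Multiset.card_map]
  exact Multiset.card_le_card (Multiset.monotone_filter_right _ h)

theorem Multiset.card_filter_re_lt_lt_card_filter_re_le {s : Multiset ℂ} {t : ℝ}
    (ht : (t : ℂ) ∈ s) :
    Multiset.card (s.filter (·.re < t)) < Multiset.card (s.filter (·.re ≤ t)) := by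
  refine Multiset.card_lt_card (lt_of_le_not_ge
    (Multiset.monotone_filter_right _ fun _ => le_of_lt) fun hle => ?_)
  have := (Multiset.mem_filter.1 (Multiset.mem_of_le hle
    (Multiset.mem_filter.2 ⟨ht, le_of_eq (Complex.ofReal_re t)⟩))).2
  simp at this

theorem Filter.eventually_of_forall_exists_subseq {ι : Type*} {l : Filter ι}
    [l.IsCountablyGenerated] {p : ι → Prop}
    (h : ∀ x : ℕ → ι, Tendsto x atTop l → ∃ φ : ℕ → ℕ, ∀ᶠ m in atTop, p (x (φ m))) :
    ∀ᶠ i in l, p i := by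
  simpa [tendsto_principal] using
    tendsto_of_subseq_tendsto (x := id) (f := 𝓟 {i | p i}) (l := l)
      (by simpa [tendsto_principal] using h)

theorem eventually_forall_lt_of_tendsto {α ι β : Type*} [Finite ι] [TopologicalSpace β]
    [LinearOrder β] [OrderClosedTopology β] {l : Filter α} {u v : α → ι → β} {u' v' : ι → β}
    (hu : Tendsto u l (𝓝 u')) (hv : Tendsto v l (𝓝 v')) :
    ∀ᶠ a in l, ∀ j, u' j < v' j → u a j < v a j := by
  refine eventually_all.2 fun j => ?_
  by_cases h : u' j < v' j
  · filter_upwards [(tendsto_pi_nhds.1 hu j).eventually_lt (tendsto_pi_nhds.1 hv j) h] with a ha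
    exact fun _ => ha
  · exact Eventually.of_forall fun _ h' => absurd h' h

theorem continuous_coeff_prod_X_sub_C_s16 {ι R : Type*} [Fintype ι] [CommRing R] [TopologicalSpace R]
    [IsTopologicalRing R] (l : ℕ) :
    Continuous fun z : ι → R => (∏ j, (X - Polynomial.C (z j))).coeff l := by
  have h : ∀ z : ι → R, (∏ j, (X - Polynomial.C (z j))).coeff l =
      MvPolynomial.eval z
        ((∏ j, (X - Polynomial.C (MvPolynomial.X j : MvPolynomial ι R))).coeff l) := by
    intro z
    rw [← coeff_map, Polynomial.map_prod]
    simp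
  simp_rw [h]
  exact MvPolynomial.continuous_eval _

theorem Polynomial.Monic.norm_lt_of_mem_roots {K : Type*} [NormedField K] {Q : K[X]}
    (hQ : Q.Monic) {B : ℝ} (hB₀ : 0 ≤ B) (hB : ∀ j < Q.natDegree, ‖Q.coeff j‖ ≤ B) {z : K}
    (hz : z ∈ Q.roots) : ‖z‖ < B + 1 := by
  lift B to NNReal using hB₀
  have hsup : (Finset.range Q.natDegree).sup (‖Q.coeff ·‖₊) ≤ B :=
    Finset.sup_le fun j hj => by exact_mod_cast hB j (Finset.mem_range.1 hj)
  have hlt := IsRoot.norm_lt_cauchyBound hQ.ne_zero (isRoot_of_mem_roots hz)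
  rw [cauchyBound, hQ.leadingCoeff, nnnorm_one, div_one] at hlt
  exact_mod_cast hlt.trans_le (add_le_add_left hsup 1)

section RootsSemicontinuity

theorem exists_subseq_tendsto_roots {Q : ℕ → ℂ[X]} {Q' : ℂ[X]} {n : ℕ}
    (hmon : ∀ m, (Q m).Monic) (hdeg : ∀ m, (Q m).natDegree = n)
    (hcoeff : ∀ j, Tendsto (fun m => (Q m).coeff j) atTop (𝓝 (Q'.coeff j))) :
    ∃ φ : ℕ → ℕ, StrictMono φ ∧ ∃ z : ℕ → Fin n → ℂ, ∃ z' : Fin n → ℂ,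
      (∀ m, (Q (φ m)).roots = Finset.univ.val.map (z m)) ∧
      Q'.roots = Finset.univ.val.map z' ∧ Tendsto z atTop (𝓝 z') := by
  choose w hw using fun m => Multiset.exists_eq_map_univ_fin
    ((IsAlgClosed.card_roots_eq_natDegree (p := Q m)).trans (hdeg m))
  have hprod : ∀ m, Q m = ∏ j, (X - Polynomial.C (w m j)) := fun m => by
    conv_lhs => rw [(IsAlgClosed.splits (Q m)).eq_prod_roots_of_monic (hmon m), hw m,
      Multiset.map_map]
    rfl
  obtain ⟨B, hB₀, hB⟩ : ∃ B, 0 < B ∧ ∀ m, ∀ j < n, ‖(Q m).coeff j‖ ≤ B := by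
    have hv : Tendsto (fun m (j : Fin n) => (Q m).coeff j) atTop (𝓝 fun j => Q'.coeff j) :=
      tendsto_pi_nhds.2 fun j => hcoeff j
    obtain ⟨B, hB₀, hB⟩ := (Metric.isBounded_range_of_tendsto _ hv).exists_pos_norm_le
    exact ⟨B, hB₀, fun m j hj =>
      (norm_le_pi_norm (fun j : Fin n => (Q m).coeff j) ⟨j, hj⟩).trans (hB _ ⟨m, rfl⟩)⟩
  have hw_le : ∀ m, w m ∈ Metric.closedBall 0 (B + 1) := fun m => by
    rw [mem_closedBall_zero_iff, pi_norm_le_iff_of_nonneg (by positivity)]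
    exact fun j => ((hmon m).norm_lt_of_mem_roots hB₀.le (hdeg m ▸ hB m)
      (by rw [hw m]; exact Multiset.mem_map_of_mem _ (Finset.mem_univ j))).le
  obtain ⟨z', -, φ, hφ, hlim⟩ := tendsto_subseq_of_bounded Metric.isBounded_closedBall hw_le
  have hQ' : Q' = ∏ j, (X - Polynomial.C (z' j)) := by
    ext l
    refine tendsto_nhds_unique ((hcoeff l).comp hφ.tendsto_atTop) ?_
    simpa only [Function.comp_def, ← hprod] using
      ((continuous_coeff_prod_X_sub_C_s16 l).tendsto z').comp hlim
  refine ⟨φ, hφ, w ∘ φ, z', fun m => hw (φ m), ?_, hlim⟩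
  rw [hQ', ← roots_multiset_prod_X_sub_C (Finset.univ.val.map z'), Multiset.map_map]
  rfl

theorem eventually_roots_of_tendsto_coeff {α : Type*} {l : Filter α} [l.IsCountablyGenerated]
    {Q : α → ℂ[X]} {Q' : ℂ[X]} {n : ℕ} (hmon : ∀ a, (Q a).Monic) (hdeg : ∀ a, (Q a).natDegree = n)
    (hcoeff : ∀ j, Tendsto (fun a => (Q a).coeff j) l (𝓝 (Q'.coeff j)))
    {p : α → Multiset ℂ → Prop}
    (hp : ∀ x : ℕ → α, Tendsto x atTop l → ∀ (z : ℕ → Fin n → ℂ) (z' : Fin n → ℂ),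
      Q'.roots = Finset.univ.val.map z' → Tendsto z atTop (𝓝 z') →
      ∀ᶠ m in atTop, p (x m) (Finset.univ.val.map (z m))) :
    ∀ᶠ a in l, p a (Q a).roots := by
  refine eventually_of_forall_exists_subseq fun x hx => ?_
  obtain ⟨φ, hφ, z, z', hz, hz', hlim⟩ := exists_subseq_tendsto_roots (Q := Q ∘ x)
    (fun m => hmon _) (fun m => hdeg _) (fun j => (hcoeff j).comp hx)
  refine ⟨φ, ?_⟩
  filter_upwards [hp (x ∘ φ) (hx.comp hφ.tendsto_atTop) z z' hz' hlim] with m hm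
  rwa [← hz m] at hm

variable {α : Type*} {l : Filter α} [l.IsCountablyGenerated] {Q : α → ℂ[X]} {Q' : ℂ[X]} {n : ℕ}
  {t : α → ℝ} {t' : ℝ}

theorem eventually_le_card_roots_re_lt (hmon : ∀ a, (Q a).Monic)
    (hdeg : ∀ a, (Q a).natDegree = n)
    (hcoeff : ∀ j, Tendsto (fun a => (Q a).coeff j) l (𝓝 (Q'.coeff j)))
    (ht : Tendsto t l (𝓝 t')) :
    ∀ᶠ a in l, Multiset.card (Q'.roots.filter (·.re < t')) ≤
      Multiset.card ((Q a).roots.filter (·.re < t a)) := by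
  refine eventually_roots_of_tendsto_coeff
    (p := fun a s => Multiset.card (Q'.roots.filter (·.re < t')) ≤
      Multiset.card (s.filter (·.re < t a))) hmon hdeg hcoeff fun x hx z z' hz' hlim => ?_
  have hre := (continuous_pi fun j => Complex.continuous_re.comp (continuous_apply j)).tendsto z'
  filter_upwards [eventually_forall_lt_of_tendsto (hre.comp hlim)
    (tendsto_pi_nhds.2 fun _ => ht.comp hx)] with m hm
  rw [hz']
  exact Multiset.card_filter_map_univ_le hm

theorem eventually_card_roots_re_le_le (hmon : ∀ a, (Q a).Monic)
    (hdeg : ∀ a, (Q a).natDegree = n)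
    (hcoeff : ∀ j, Tendsto (fun a => (Q a).coeff j) l (𝓝 (Q'.coeff j)))
    (ht : Tendsto t l (𝓝 t')) :
    ∀ᶠ a in l, Multiset.card ((Q a).roots.filter (·.re ≤ t a)) ≤
      Multiset.card (Q'.roots.filter (·.re ≤ t')) := by
  refine eventually_roots_of_tendsto_coeff
    (p := fun a s => Multiset.card (s.filter (·.re ≤ t a)) ≤
      Multiset.card (Q'.roots.filter (·.re ≤ t'))) hmon hdeg hcoeff fun x hx z z' hz' hlim => ?_
  have hre := (continuous_pi fun j => Complex.continuous_re.comp (continuous_apply j)).tendsto z'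
  filter_upwards [eventually_forall_lt_of_tendsto (tendsto_pi_nhds.2 fun _ => ht.comp hx)
    (hre.comp hlim)] with m hm
  rw [hz']
  exact Multiset.card_filter_map_univ_le fun j h =>
    le_of_not_gt fun h' => not_le.2 (hm j h') h

end RootsSemicontinuity

theorem exists_fin_cover_closure_fiber {X β : Type*} [TopologicalSpace X] {ρ : X → β}
    (hρ : (Set.range ρ).Finite) : ∃ r, ∃ Mi : Fin r → Set X, (∀ i, IsClosed (Mi i)) ∧
      ⋃ i, Mi i = Set.univ ∧ ∀ i, ∃ b, Mi i = closure {x | ρ x = b} := by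
  have := hρ.to_subtype
  obtain ⟨r, ⟨e⟩⟩ := Finite.exists_equiv_fin (Set.range ρ)
  refine ⟨r, fun i => closure {x | ρ x = e.symm i}, fun _ => isClosed_closure,
    Set.eq_univ_of_forall fun x => Set.mem_iUnion.2 ⟨e ⟨ρ x, x, rfl⟩, subset_closure ?_⟩,
    fun i => ⟨_, rfl⟩⟩
  simp

theorem exists_comp_eqOn_of_injOn {X Y : Type*} [TopologicalSpace X] [TopologicalSpace Y]
    [NormalSpace Y] {π : C(X, Y)} (hπ : IsClosedMap π) {s : Set X} (hs : IsClosed s)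
    (hinj : Set.InjOn π s) (g : C(X, ℝ)) : ∃ h : C(Y, ℝ), Set.EqOn (h ∘ π) g s := by
  have he : IsClosedEmbedding (s.domRestrict π) :=
    .of_continuous_injective_isClosedMap (π.continuous.comp continuous_subtype_val)
      hinj.injective (hπ.comp hs.isClosedMap_subtype_val)
  obtain ⟨h, hh⟩ := (g.restrict s).exists_extension' he
  exact ⟨h, fun x hx => congrFun hh ⟨x, hx⟩⟩

namespace ContinuousMap

def evalRingHom {X : Type*} [TopologicalSpace X] (x : X) : C(X, ℝ) →+* ℝ :=
  (Pi.evalRingHom (fun _ => ℝ) x).comp ContinuousMap.coeFnRingHom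

end ContinuousMap

section PullbackAlgebra

variable {M N : Type*} [TopologicalSpace M] [TopologicalSpace N]

@[simp]
theorem phiPi_apply_s16 (π : C(M, N)) (g : C(N, ℝ)) (x : M) : phiPi π g x = g (π x) := rfl

theorem apply_eq_of_mem_subring_closure {ι : Type*} {π : C(M, N)} {f : ι → C(M, ℝ)} {p q : M}
    (hπ : π p = π q) (hf : ∀ i, f i p = f i q) {h : C(M, ℝ)}
    (hh : h ∈ Subring.closure (Set.range (phiPi π) ∪ Set.range f)) : h p = h q := by
  refine Subring.closure_le
    (t := (ContinuousMap.evalRingHom p).eqLocus (ContinuousMap.evalRingHom q)) |>.2 ?_ hh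
  rintro _ (⟨g, rfl⟩ | ⟨i, rfl⟩)
  exacts [congrArg g hπ, hf i]

theorem phiPi_isIntegral_of_closed_cover [NormalSpace N] {ι : Type*} [Fintype ι] {π : C(M, N)}
    (hπ : IsClosedMap π) {Mi : ι → Set M} (hclosed : ∀ i, IsClosed (Mi i))
    (hcover : ⋃ i, Mi i = Set.univ) (hinj : ∀ i, Set.InjOn π (Mi i)) :
    (phiPi π).IsIntegral := by
  intro g
  choose h hh using fun i => exists_comp_eqOn_of_injOn hπ (hclosed i) (hinj i) g
  refine ⟨∏ i, (X - Polynomial.C (h i)), monic_prod_of_monic _ _ fun i _ => monic_X_sub_C _, ?_⟩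
  ext x
  obtain ⟨i, hi⟩ := Set.mem_iUnion.1 (hcover ▸ Set.mem_univ x)
  simp only [eval₂_finsetProd, eval₂_sub, eval₂_X, eval₂_C, ContinuousMap.prod_apply,
    ContinuousMap.sub_apply, phiPi_apply_s16, ContinuousMap.zero_apply]
  exact Finset.prod_eq_zero (Finset.mem_univ i) (sub_eq_zero.2 (hh i hi).symm)

noncomputable def fiberPoly (P : C(N, ℝ)[X]) (y : N) : ℂ[X] :=
  P.map (Complex.ofRealHom.comp (ContinuousMap.evalRingHom y))

section FiberPoly

variable {P : C(N, ℝ)[X]}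

theorem fiberPoly_monic (hP : P.Monic) (y : N) : (fiberPoly P y).Monic := hP.map _

theorem natDegree_fiberPoly (hP : P.Monic) (y : N) :
    (fiberPoly P y).natDegree = P.natDegree := hP.natDegree_map _

theorem coeff_fiberPoly (y : N) (j : ℕ) : (fiberPoly P y).coeff j = (P.coeff j y : ℂ) :=
  coeff_map _ _

theorem tendsto_coeff_fiberPoly (π : C(M, N)) (x₀ : M) (j : ℕ) :
    Tendsto (fun x => (fiberPoly P (π x)).coeff j) (𝓝 x₀)
      (𝓝 ((fiberPoly P (π x₀)).coeff j)) := by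
  simp only [coeff_fiberPoly]
  exact (Complex.continuous_ofReal.comp ((P.coeff j).continuous.comp π.continuous)).tendsto x₀

theorem ofReal_mem_roots_fiberPoly {π : C(M, N)} {g : C(M, ℝ)} (hP : P.Monic)
    (hg : eval₂ (phiPi π) g P = 0) (x : M) : (g x : ℂ) ∈ (fiberPoly P (π x)).roots := by
  rw [mem_roots (fiberPoly_monic hP _).ne_zero, IsRoot.def, fiberPoly, eval_map]
  have := congrArg (Complex.ofRealHom.comp (ContinuousMap.evalRingHom x)) hg
  rw [hom_eval₂, map_zero] at this
  exact this

end FiberPoly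

noncomputable def rootRank (π : C(M, N)) (P : C(N, ℝ)[X]) (g : C(M, ℝ)) (x : M) : ℕ :=
  Multiset.card ((fiberPoly P (π x)).roots.filter (·.re < g x))

section RootRank

variable {π : C(M, N)} {P : C(N, ℝ)[X]} {g : C(M, ℝ)}

theorem rootRank_le_natDegree (hP : P.Monic) (x : M) : rootRank π P g x ≤ P.natDegree :=
  (Multiset.card_le_card (Multiset.filter_le _ _)).trans <|
    (card_roots' _).trans (natDegree_fiberPoly hP _).le

theorem rootRank_lt_card_roots_re_le (hP : P.Monic) (hg : eval₂ (phiPi π) g P = 0) (x : M) :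
    rootRank π P g x < Multiset.card ((fiberPoly P (π x)).roots.filter (·.re ≤ g x)) :=
  Multiset.card_filter_re_lt_lt_card_filter_re_le (ofReal_mem_roots_fiberPoly hP hg x)

theorem not_lt_of_mem_closure_rootRank_fiber [FirstCountableTopology M] (hP : P.Monic)
    (hg : eval₂ (phiPi π) g P = 0) {c : ℕ} {p q : M}
    (hp : p ∈ closure {x | rootRank π P g x = c}) (hq : q ∈ closure {x | rootRank π P g x = c})
    (hpq : π p = π q) : ¬ g p < g q := by
  intro hlt
  set Q := fiberPoly P (π p)
  have hc_lt : c < Multiset.card (Q.roots.filter (·.re ≤ g p)) := by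
    obtain ⟨x, rfl, hx⟩ := ((mem_closure_iff_frequently.1 hp).and_eventually
      (eventually_card_roots_re_le_le (fun _ => fiberPoly_monic hP _)
        (fun _ => natDegree_fiberPoly hP _) (tendsto_coeff_fiberPoly π p)
        (g.continuous.tendsto p))).exists
    exact (rootRank_lt_card_roots_re_le hP hg x).trans_le hx
  have hle_c : Multiset.card (Q.roots.filter (·.re < g q)) ≤ c := by
    obtain ⟨x, rfl, hx⟩ := ((mem_closure_iff_frequently.1 hq).and_eventually
      (eventually_le_card_roots_re_lt (fun _ => fiberPoly_monic hP _)
        (fun _ => natDegree_fiberPoly hP _) (tendsto_coeff_fiberPoly π q)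
        (g.continuous.tendsto q))).exists
    rwa [← hpq] at hx
  have hmono : Multiset.card (Q.roots.filter (·.re ≤ g p)) ≤
      Multiset.card (Q.roots.filter (·.re < g q)) :=
    Multiset.card_le_card (Multiset.monotone_filter_right _ fun _ hz => hz.trans_lt hlt)
  omega

theorem eq_of_mem_closure_rootRank_fiber [FirstCountableTopology M] (hP : P.Monic)
    (hg : eval₂ (phiPi π) g P = 0) {c : ℕ} {p q : M}
    (hp : p ∈ closure {x | rootRank π P g x = c}) (hq : q ∈ closure {x | rootRank π P g x = c})
    (hpq : π p = π q) : g p = g q :=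
  le_antisymm (not_lt.1 (not_lt_of_mem_closure_rootRank_fiber hP hg hq hp hpq.symm))
    (not_lt.1 (not_lt_of_mem_closure_rootRank_fiber hP hg hp hq hpq))

end RootRank

theorem injOn_closure_rootRank_fiber [FirstCountableTopology M] {ι : Type*} {π : C(M, N)}
    {f : ι → C(M, ℝ)} {P : ι → C(N, ℝ)[X]} (hP : ∀ i, (P i).Monic)
    (hPf : ∀ i, eval₂ (phiPi π) (f i) (P i) = 0)
    (hsep : ∀ p q : M, p ≠ q →
      ∃ h ∈ Subring.closure (Set.range (phiPi π) ∪ Set.range f), h p ≠ h q)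
    (c : ι → ℕ) : Set.InjOn π (closure {x | (fun i => rootRank π (P i) (f i) x) = c}) := by
  intro p hp q hq hpq
  by_contra hne
  obtain ⟨h, hh, hhpq⟩ := hsep p q hne
  refine hhpq (apply_eq_of_mem_subring_closure hpq (fun i => ?_) hh)
  have hsub := closure_mono fun x (hx : (fun i => rootRank π (P i) (f i) x) = c) =>
    (congrFun hx i : rootRank π (P i) (f i) x = c i)
  exact eq_of_mem_closure_rootRank_fiber (hP i) (hPf i) (hsub hp) (hsub hq) hpq

end PullbackAlgebra

theorem closed_cover_of_separating_integral_functions_general {M N : Type*} [MetricSpace M]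
    [MetricSpace N] (π : C(M, N)) (hclosed : IsClosedMap π)
    (k : ℕ) (f : Fin k → C(M, ℝ))
    (hint : ∀ i, (phiPi π).IsIntegralElem (f i))
    (hsep : ∀ p q : M, p ≠ q →
      ∃ h ∈ Subring.closure (Set.range (phiPi π) ∪ Set.range f), h p ≠ h q) :
    (∃ r : ℕ, ∃ Mi : Fin r → Set M, (∀ i, IsClosed (Mi i)) ∧ (⋃ i, Mi i) = Set.univ ∧
        ∀ i, Set.InjOn π (Mi i)) ∧
      (phiPi π).IsIntegral := by
  choose P hP hPf using hint
  have hrange : (Set.range fun x i => rootRank π (P i) (f i) x).Finite :=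
    (Set.finite_Iic fun i => (P i).natDegree).subset <| Set.range_subset_iff.2 fun x i =>
      rootRank_le_natDegree (hP i) x
  obtain ⟨r, Mi, hMi_closed, hMi_cover, hMi_fiber⟩ := exists_fin_cover_closure_fiber hrange
  have hMi_inj : ∀ i, Set.InjOn π (Mi i) := fun i => by
    obtain ⟨c, hc⟩ := hMi_fiber i
    exact hc ▸ injOn_closure_rootRank_fiber hP hPf hsep c
  exact ⟨⟨r, Mi, hMi_closed, hMi_cover, hMi_inj⟩,
    phiPi_isIntegral_of_closed_cover hclosed hMi_closed hMi_cover hMi_inj⟩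

/-- Let `M, N` be metric spaces and `π : M → N` a continuous, closed
and surjective map. Let `f₁, …, f_k ∈ C(M, ℝ)` with each `fᵢ` integral over `C(N, ℝ)`
via `φ_π`, and suppose the subring of `C(M, ℝ)` generated by the image of `φ_π`
together with the `fᵢ` separates the points of `M`. Then there is a finite cover of
`M` by closed subsets on each of which `π` is injective; in particular every element
of `C(M, ℝ)` is integral over `C(N, ℝ)` via `φ_π`. -/
theorem closed_cover_of_separating_integral_functions {M N : Type*} [MetricSpace M]
    [MetricSpace N] (π : C(M, N)) (hclosed : IsClosedMap π)
    (hsurj : Function.Surjective π) (k : ℕ) (f : Fin k → C(M, ℝ))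
    (hint : ∀ i, (phiPi π).IsIntegralElem (f i))
    (hsep : ∀ p q : M, p ≠ q →
      ∃ h ∈ Subring.closure (Set.range (phiPi π) ∪ Set.range f), h p ≠ h q) :
    (∃ r : ℕ, ∃ Mi : Fin r → Set M, (∀ i, IsClosed (Mi i)) ∧ (⋃ i, Mi i) = Set.univ ∧
        ∀ i, Set.InjOn π (Mi i)) ∧
      (phiPi π).IsIntegral :=
  closed_cover_of_separating_integral_functions_general π hclosed k f hint hsep
end

section
/- Let M ⊆ ℝ^m with the induced topology, let N be a metric space and let π : M → N be a continuous, closed and surjective map. Then every element of C(M,ℝ) is integral over C(N,ℝ) via φ_π if and only if there exists a finite cover M = M₁ ∪ ⋯ ∪ M_k by closed subsets of M such that each restriction π|_{M_i} is injective. -/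
/-!
If `g ∈ C(M, ℝ)` is killed by a monic `p ∈ C(N, ℝ)[X]` of degree `d`, then at every point `x`
the value `g x` is a root of `p (π x)`, hence the `r`-th smallest real part of a complex root of
`p (π x)` for some `r < d`. These sorted real parts depend continuously on the coefficients
(roots stay bounded by Cauchy's bound, and a limit of enumerations of the roots enumerates the
roots of the limit), so `M` is covered by the `d` closed sets `{g = F_r ∘ π}`. Complex roots are
needed here: real roots alone do not vary continuously. Intersecting these covers for the
coordinate functions, which separate points, gives closed pieces on which `π` is injective.

Conversely, `π` restricted to a closed piece `S_i` on which it is injective is a closed embedding,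
so by Tietze `g` agrees on `S_i` with some `H_i ∘ π`, and `∏ i, (X - H_i)` kills `g`.
-/

open ContinuousMap

theorem Multiset.exists_eq_univ_map_monotone_re {d : ℕ} (s : Multiset ℂ)
    (hs : Multiset.card s = d) :
    ∃ ρ : Fin d → ℂ, s = Finset.univ.val.map ρ ∧ Monotone fun i => (ρ i).re := by
  obtain ⟨ρ, rfl⟩ : ∃ ρ : Fin d → ℂ, s = Finset.univ.val.map ρ := by
    obtain ⟨l, rfl⟩ : ∃ l : List ℂ, s = l := ⟨s.toList, (Multiset.coe_toList s).symm⟩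
    rw [Multiset.coe_card] at hs
    subst hs
    exact ⟨l.get, by rw [Fin.univ_val_map, List.ofFn_get]⟩
  refine ⟨ρ ∘ Tuple.sort (fun i => (ρ i).re), ?_, Tuple.monotone_sort (fun i => (ρ i).re)⟩
  rw [← Multiset.map_map, Multiset.map_univ_val_equiv]

namespace Polynomial

open Finset Filter Topology

section Semiring

variable {R : Type*} [Semiring R] {d : ℕ}

noncomputable def monicOfCoeffs (a : Fin d → R) : R[X] :=
  X ^ d + ∑ i : Fin d, C (a i) * X ^ (i : ℕ)

theorem monicOfCoeffs_monic [Nontrivial R] (a : Fin d → R) : (monicOfCoeffs a).Monic :=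
  monic_X_pow_add (degree_sum_fin_lt a)

theorem natDegree_monicOfCoeffs [Nontrivial R] (a : Fin d → R) :
    (monicOfCoeffs a).natDegree = d := by
  rw [monicOfCoeffs, natDegree_add_eq_left_of_degree_lt, natDegree_X_pow]
  simpa using degree_sum_fin_lt a

theorem coeff_monicOfCoeffs (a : Fin d → R) (i : Fin d) : (monicOfCoeffs a).coeff i = a i := by
  simp [monicOfCoeffs, coeff_X_pow, i.isLt.ne, Fin.val_inj]

theorem map_monicOfCoeffs {S : Type*} [Semiring S] (f : R →+* S) (a : Fin d → R) :
    (monicOfCoeffs a).map f = monicOfCoeffs (f ∘ a) := by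
  simp [monicOfCoeffs, Polynomial.map_sum]

theorem Monic.monicOfCoeffs_coeff {p : R[X]} (hp : p.Monic) :
    monicOfCoeffs (fun i : Fin p.natDegree => p.coeff i) = p := by
  conv_rhs => rw [hp.as_sum]
  rw [monicOfCoeffs, Fin.sum_univ_eq_sum_range (fun i => C (p.coeff i) * X ^ i)]

end Semiring

variable {d : ℕ}

theorem card_roots_monicOfCoeffs (a : Fin d → ℂ) : Multiset.card (monicOfCoeffs a).roots = d := by
  rw [IsAlgClosed.card_roots_eq_natDegree, natDegree_monicOfCoeffs]

theorem norm_lt_of_mem_roots_monicOfCoeffs {a : Fin d → ℂ} {z : ℂ}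
    (hz : z ∈ (monicOfCoeffs a).roots) : ‖z‖ < ‖a‖ + 1 := by
  have hroot := (mem_roots (monicOfCoeffs_monic a).ne_zero).1 hz
  have hlt := hroot.norm_lt_cauchyBound (monicOfCoeffs_monic a).ne_zero
  have hbound : cauchyBound (monicOfCoeffs a) ≤ ‖a‖₊ + 1 := by
    rw [cauchyBound, (monicOfCoeffs_monic a).leadingCoeff, nnnorm_one, div_one,
      natDegree_monicOfCoeffs]
    gcongr
    refine Finset.sup_le fun i hi => ?_
    have hi : i < d := Finset.mem_range.1 hi
    simpa [coeff_monicOfCoeffs a ⟨i, hi⟩] using nnnorm_le_pi_nnnorm a ⟨i, hi⟩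
  exact_mod_cast hlt.trans_le hbound

theorem continuous_eval_monicOfCoeffs (z : ℂ) :
    Continuous fun a : Fin d → ℂ => (monicOfCoeffs a).eval z := by
  simp only [monicOfCoeffs, eval_add, eval_pow, eval_X, eval_finsetSum, eval_mul, eval_C]
  fun_prop

noncomputable def sortedRootRe (q : ℂ[X]) (r : ℕ) : ℝ :=
  ((q.roots.map Complex.re).sort (· ≤ ·)).getD r 0

theorem exists_sortedRootRe_eq {q : ℂ[X]} {z : ℂ} (hz : z ∈ q.roots) :
    ∃ r < Multiset.card q.roots, q.sortedRootRe r = z.re := by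
  have hmem : z.re ∈ (q.roots.map Complex.re).sort (· ≤ ·) :=
    (Multiset.mem_sort _).2 (Multiset.mem_map_of_mem _ hz)
  obtain ⟨r, hr, hget⟩ := List.getElem_of_mem hmem
  refine ⟨r, by simpa using hr, ?_⟩
  rw [sortedRootRe, List.getD_eq_getElem _ _ hr, hget]

theorem sortedRootRe_eq_of_roots_eq {q : ℂ[X]} {ρ : Fin d → ℂ}
    (hq : q.roots = univ.val.map ρ) (hρ : Monotone fun i => (ρ i).re) (i : Fin d) :
    q.sortedRootRe i = (ρ i).re := by
  have hsorted : (q.roots.map Complex.re).sort (· ≤ ·) = List.ofFn fun i => (ρ i).re := by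
    rw [hq, Multiset.map_map, Fin.univ_val_map, Multiset.coe_sort]
    exact List.mergeSort_eq_self _ (List.pairwise_ofFn.2 fun i j hij => by simpa using hρ hij.le)
  simp [sortedRootRe, hsorted]

theorem eval_monicOfCoeffs_eq_prod {a : Fin d → ℂ} {ρ : Fin d → ℂ}
    (hroots : (monicOfCoeffs a).roots = univ.val.map ρ) (z : ℂ) :
    (monicOfCoeffs a).eval z = ∏ i, (z - ρ i) := by
  rw [(IsAlgClosed.splits _).eval_eq_prod_roots_of_monic (monicOfCoeffs_monic a), hroots,
    Multiset.map_map]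
  rfl

theorem roots_fintype_prod_X_sub_C {ι R : Type*} [Fintype ι] [CommRing R] [IsDomain R]
    (ρ : ι → R) : (∏ i, (X - C (ρ i))).roots = univ.val.map ρ := by
  rw [Finset.prod_eq_multiset_prod, ← Function.comp_def (fun z => X - C z) ρ, ← Multiset.map_map,
    roots_multiset_prod_X_sub_C]

theorem roots_monicOfCoeffs_eq_of_tendsto {α : Type*} {l : Filter α} [l.NeBot]
    {a : α → Fin d → ℂ} {a₀ : Fin d → ℂ} {ρ : α → Fin d → ℂ} {ρ₀ : Fin d → ℂ}
    (ha : Tendsto a l (𝓝 a₀)) (hρ : Tendsto ρ l (𝓝 ρ₀))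
    (hroots : ∀ n, (monicOfCoeffs (a n)).roots = univ.val.map (ρ n)) :
    (monicOfCoeffs a₀).roots = univ.val.map ρ₀ := by
  suffices monicOfCoeffs a₀ = ∏ i, (X - C (ρ₀ i)) by rw [this, roots_fintype_prod_X_sub_C]
  refine Polynomial.funext fun z => tendsto_nhds_unique
    ((continuous_eval_monicOfCoeffs z).continuousAt.tendsto.comp ha) ?_
  simp_rw [Function.comp_def, eval_monicOfCoeffs_eq_prod (hroots _), eval_prod, eval_sub, eval_X,
    eval_C]
  exact tendsto_finsetProd _ fun i _ =>
    tendsto_const_nhds.sub (((continuous_apply i).tendsto _).comp hρ)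

theorem continuous_sortedRootRe_monicOfCoeffs (r : Fin d) :
    Continuous fun a : Fin d → ℂ => (monicOfCoeffs a).sortedRootRe r := by
  refine continuous_iff_seqContinuous.2 fun a a₀ ha => tendsto_of_subseq_tendsto fun ns hns => ?_
  choose ρ hρ hmono using fun n =>
    Multiset.exists_eq_univ_map_monotone_re _ (card_roots_monicOfCoeffs (a (ns n)))
  obtain ⟨B, hB⟩ := ((continuous_norm.tendsto a₀).comp ha).bddAbove_range
  have hB₀ : 0 ≤ B := (norm_nonneg _).trans (hB (Set.mem_range_self 0))
  have hρB : ∀ n, ρ n ∈ Metric.closedBall 0 (B + 1) := fun n => by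
    rw [mem_closedBall_zero_iff, pi_norm_le_iff_of_nonneg (by positivity)]
    intro i
    have hmem : ρ n i ∈ (monicOfCoeffs (a (ns n))).roots :=
      (hρ n).symm ▸ Multiset.mem_map_of_mem (ρ n) (mem_univ_val i)
    have hBn : ‖a (ns n)‖ ≤ B := hB (Set.mem_range_self _)
    linarith [norm_lt_of_mem_roots_monicOfCoeffs hmem]
  obtain ⟨ρ₀, -, φ, hφ, hlim⟩ := (isCompact_closedBall 0 (B + 1)).tendsto_subseq hρB
  have hre : ∀ i, Tendsto (fun n => (ρ (φ n) i).re) atTop (𝓝 (ρ₀ i).re) := fun i =>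
    (Complex.continuous_re.tendsto _).comp (((continuous_apply i).tendsto ρ₀).comp hlim)
  have hmono₀ : Monotone fun i => (ρ₀ i).re := fun i j hij =>
    le_of_tendsto_of_tendsto' (hre i) (hre j) fun n => hmono (φ n) hij
  have hroots₀ := roots_monicOfCoeffs_eq_of_tendsto ((ha.comp hns).comp hφ.tendsto_atTop) hlim
    fun n => hρ (φ n)
  refine ⟨φ, ?_⟩
  simp only [Function.comp_def, sortedRootRe_eq_of_roots_eq (hρ _) (hmono _),
    sortedRootRe_eq_of_roots_eq hroots₀ hmono₀]
  exact hre r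

end Polynomial

open Polynomial

section ClosedCover

variable {M N : Type*} [TopologicalSpace M] [TopologicalSpace N]

theorem exists_continuous_root_branches (p : C(N, ℝ)[X]) (hp : p.Monic) :
    ∃ F : Fin p.natDegree → C(N, ℝ), ∀ (y : N) (z : ℂ),
      (p.map ((algebraMap ℝ ℂ).comp (evalAlgHom ℝ ℝ y : C(N, ℝ) →+* ℝ))).IsRoot z →
        ∃ r, F r y = z.re := by
  let a : N → Fin p.natDegree → ℂ := fun y i => (p.coeff i y : ℂ)
  have ha : Continuous a := by fun_prop
  refine ⟨fun r => ⟨fun y => (monicOfCoeffs (a y)).sortedRootRe r,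
    (continuous_sortedRootRe_monicOfCoeffs r).comp ha⟩, fun y z hz => ?_⟩
  rw [← hp.monicOfCoeffs_coeff, map_monicOfCoeffs] at hz
  obtain ⟨r, hr, hre⟩ := exists_sortedRootRe_eq ((mem_roots (monicOfCoeffs_monic _).ne_zero).2 hz)
  exact ⟨⟨r, card_roots_monicOfCoeffs (a y) ▸ hr⟩, hre⟩

theorem exists_continuous_branches_of_isIntegralElem (π : C(M, N)) {g : C(M, ℝ)}
    (hg : (phiPi π).IsIntegralElem g) :
    ∃ k, ∃ F : Fin k → C(N, ℝ), ∀ x, ∃ r, g x = F r (π x) := by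
  obtain ⟨p, hp, hpg⟩ := hg
  obtain ⟨F, hF⟩ := exists_continuous_root_branches p hp
  refine ⟨_, F, fun x => ?_⟩
  let ψ : C(M, ℝ) →+* ℂ := (algebraMap ℝ ℂ).comp (evalAlgHom ℝ ℝ x : C(M, ℝ) →+* ℝ)
  have hroot : (p.map ((algebraMap ℝ ℂ).comp (evalAlgHom ℝ ℝ (π x) : C(N, ℝ) →+* ℝ))).IsRoot
      (g x : ℂ) := by
    have hψ : ψ.comp (phiPi π) =
        (algebraMap ℝ ℂ).comp (evalAlgHom ℝ ℝ (π x) : C(N, ℝ) →+* ℝ) := RingHom.ext fun _ => rfl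
    rw [IsRoot.def, eval_map, ← hψ, show (g x : ℂ) = ψ g from rfl, ← hom_eval₂, hpg, map_zero]
  obtain ⟨r, hr⟩ := hF _ _ hroot
  exact ⟨r, by simpa using hr.symm⟩

theorem exists_closed_cover_injOn_of_isIntegralElem {ι : Type*} [Finite ι] (π : C(M, N))
    (g : ι → C(M, ℝ)) (hg : ∀ j, (phiPi π).IsIntegralElem (g j))
    (hsep : Function.Injective fun x j => g j x) :
    ∃ k : ℕ, ∃ S : Fin k → Set M, (∀ i, IsClosed (S i)) ∧ (⋃ i, S i) = Set.univ ∧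
      ∀ i, Set.InjOn π (S i) := by
  choose k F hF using fun j => exists_continuous_branches_of_isIntegralElem π (hg j)
  let T : (∀ j, Fin (k j)) → Set M := fun v => {x | ∀ j, g j x = F j (v j) (π x)}
  let e := Finite.equivFin (∀ j, Fin (k j))
  refine ⟨_, T ∘ e.symm, fun i => ?_, Set.eq_univ_of_forall fun x => ?_,
    fun i x hx x' hx' hxx' => ?_⟩
  · simp only [Function.comp_apply, T, Set.ofPred_forall]
    exact isClosed_iInter fun j =>
      isClosed_eq (g j).continuous ((F j _).continuous.comp π.continuous)
  · choose v hv using (hF · x)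
    exact Set.mem_iUnion.2 ⟨e v, by simpa [T] using hv⟩
  · exact hsep (funext fun j => (hx j).trans ((congrArg _ hxx').trans (hx' j).symm))

theorem exists_comp_eqOn_of_injOn_s18 [NormalSpace N] (π : C(M, N)) (hπ : IsClosedMap π)
    {S : Set M} (hS : IsClosed S) (hinj : S.InjOn π) (g : C(M, ℝ)) :
    ∃ H : C(N, ℝ), S.EqOn (H ∘ π) g := by
  have he : Topology.IsClosedEmbedding (π ∘ Subtype.val : S → N) :=
    .of_continuous_injective_isClosedMap (by fun_prop) hinj.injective
      (hπ.comp hS.isClosedMap_subtype_val)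
  obtain ⟨H, hH⟩ := (g.restrict S).exists_extension' he
  exact ⟨H, fun x hx => congrFun hH ⟨x, hx⟩⟩

theorem isIntegral_phiPi_of_closed_cover [NormalSpace N] {ι : Type*} [Fintype ι] (π : C(M, N))
    (hπ : IsClosedMap π) (S : ι → Set M) (hS : ∀ i, IsClosed (S i))
    (hcover : (⋃ i, S i) = Set.univ) (hinj : ∀ i, Set.InjOn π (S i)) : (phiPi π).IsIntegral := by
  intro g
  choose H hH using fun i => exists_comp_eqOn_of_injOn_s18 π hπ (hS i) (hinj i) g
  refine ⟨∏ i, (X - Polynomial.C (H i)), monic_prod_of_monic _ _ fun i _ => monic_X_sub_C _, ?_⟩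
  ext x
  obtain ⟨i, hi⟩ := Set.mem_iUnion.1 (hcover ▸ Set.mem_univ x : x ∈ ⋃ i, S i)
  simp only [eval₂_finsetProd, eval₂_sub, eval₂_X, eval₂_C, ContinuousMap.prod_apply,
    ContinuousMap.sub_apply, ContinuousMap.zero_apply]
  exact Finset.prod_eq_zero (Finset.mem_univ i) (sub_eq_zero.2 (hH i hi).symm)

end ClosedCover

theorem integral_iff_closed_cover_general {m : ℕ} (M : Set (Fin m → ℝ)) {N : Type*}
    [MetricSpace N] (π : C(M, N)) (hclosed : IsClosedMap π) :
    (phiPi π).IsIntegral ↔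
      ∃ k : ℕ, ∃ Mi : Fin k → Set M, (∀ i, IsClosed (Mi i)) ∧ (⋃ i, Mi i) = Set.univ ∧
        ∀ i, Set.InjOn π (Mi i) := by
  refine ⟨fun h => ?_, fun ⟨_, Mi, hMc, hMu, hMinj⟩ =>
    isIntegral_phiPi_of_closed_cover π hclosed Mi hMc hMu hMinj⟩
  let coord : Fin m → C(M, ℝ) := fun j =>
    ⟨fun x => (x : Fin m → ℝ) j, (continuous_apply j).comp continuous_subtype_val⟩
  exact exists_closed_cover_injOn_of_isIntegralElem π coord (fun j => h _) Subtype.val_injective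

/-- Let `M ⊆ ℝ^m` with the induced topology, `N` a metric space and
`π : M → N` a continuous, closed and surjective map. Then every element of `C(M, ℝ)`
is integral over `C(N, ℝ)` via `φ_π` if and only if there is a finite cover of `M` by
closed subsets on each of which `π` is injective. -/
theorem integral_iff_closed_cover {m : ℕ} (M : Set (Fin m → ℝ)) {N : Type*}
    [MetricSpace N] (π : C(M, N)) (hclosed : IsClosedMap π)
    (hsurj : Function.Surjective π) :
    (phiPi π).IsIntegral ↔
      ∃ k : ℕ, ∃ Mi : Fin k → Set M, (∀ i, IsClosed (Mi i)) ∧ (⋃ i, Mi i) = Set.univ ∧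
        ∀ i, Set.InjOn π (Mi i) :=
  integral_iff_closed_cover_general M π hclosed
end
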